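/- arXiv:physics/9709008 — 4 statements merged into one kernel-verified Lean document; each statement's English description precedes it below -/
import Mathlib

section
/- Let (G, [·,·]) be a finite-dimensional real Lie algebra and ω a non-degenerate skew-symmetric bilinear form on G satisfying the 2-cocycle identity ω([x,y],z) + ω([y,z],x) + ω([z,x],y) = 0. Define a multiplication on G by ω(x·y, z) = −ω(y, [x,z]) for all z. Then this multiplication is left-symmetric: (x·y)·z − x·(y·z) = (y·x)·z − y·(x·z) for all x,y,z. -/
/-! The product is characterised by `ω(x·y, ·) = -ω(y, ad x ·)`, i.e. `L_x` is the `ω`-transpose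
of `-ad x`. Since `x ↦ -(ad x)ᵀ` is a Lie algebra morphism (Jacobi identity), this gives
`L_{[x,y]} = [L_x, L_y]`; the cocycle identity says exactly that the product is torsion free,
`x·y - y·x = [x,y]`, and the two together are left symmetry. -/

namespace LinearMap.SeparatingLeft

variable {R L : Type*} [CommRing R] [LieRing L] [LieAlgebra R L]
  {ω : L →ₗ[R] L →ₗ[R] R} {mul : L → L → L}

theorem eq_of_forall_apply_eq (hω : ω.SeparatingLeft) {a b : L} (h : ∀ w, ω a w = ω b w) :
    a = b :=
  LinearMap.ker_eq_bot.mp (separatingLeft_iff_ker_eq_bot.mp hω) (LinearMap.ext h)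

theorem sub_mul_eq (hω : ω.SeparatingLeft) (hmul : ∀ x y z, ω (mul x y) z = -ω y ⁅x, z⁆)
    (a b z : L) : mul (a - b) z = mul a z - mul b z :=
  hω.eq_of_forall_apply_eq fun w ↦ by
    simp only [hmul, map_sub, LinearMap.sub_apply, sub_lie]
    ring

theorem lie_mul_eq (hω : ω.SeparatingLeft) (hmul : ∀ x y z, ω (mul x y) z = -ω y ⁅x, z⁆)
    (x y z : L) : mul ⁅x, y⁆ z = mul x (mul y z) - mul y (mul x z) :=
  hω.eq_of_forall_apply_eq fun w ↦ by
    simp only [hmul, map_sub, LinearMap.sub_apply, lie_lie]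
    ring

theorem mul_sub_mul_swap_eq_lie (hω : ω.SeparatingLeft) (hskew : ∀ x y, ω x y = -ω y x)
    (hcocycle : ∀ x y z, ω ⁅x, y⁆ z + ω ⁅y, z⁆ x + ω ⁅z, x⁆ y = 0)
    (hmul : ∀ x y z, ω (mul x y) z = -ω y ⁅x, z⁆) (x y : L) :
    mul x y - mul y x = ⁅x, y⁆ :=
  hω.eq_of_forall_apply_eq fun w ↦ by
    have hwx : ω y ⁅w, x⁆ = -ω y ⁅x, w⁆ := by rw [← lie_skew, map_neg]
    simp only [hmul, map_sub, LinearMap.sub_apply]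
    linear_combination -hcocycle x y w + hskew ⁅y, w⁆ x + hskew ⁅w, x⁆ y - hwx

end LinearMap.SeparatingLeft

open LinearMap.SeparatingLeft in
theorem symplectic_lie_algebra_mul_left_symmetric_general
    {L : Type*} [LieRing L] [LieAlgebra ℝ L]
    (ω : L →ₗ[ℝ] L →ₗ[ℝ] ℝ)
    (hskew : ∀ x y : L, ω x y = -ω y x)
    (hnondeg : ∀ x : L, (∀ y : L, ω x y = 0) → x = 0)
    (hcocycle : ∀ x y z : L, ω ⁅x, y⁆ z + ω ⁅y, z⁆ x + ω ⁅z, x⁆ y = 0)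
    (mul : L → L → L)
    (hmul : ∀ x y z : L, ω (mul x y) z = -ω y ⁅x, z⁆) :
    ∀ x y z : L,
      mul (mul x y) z - mul x (mul y z) = mul (mul y x) z - mul y (mul x z) := by
  intro x y z
  have hcomm : mul (mul x y) z - mul (mul y x) z = mul x (mul y z) - mul y (mul x z) := by
    rw [← sub_mul_eq hnondeg hmul, mul_sub_mul_swap_eq_lie hnondeg hskew hcocycle hmul,
      lie_mul_eq hnondeg hmul]
  rw [sub_eq_sub_iff_sub_eq_sub, hcomm]

/-- On a symplectic Lie algebra (finite-dimensional real Lie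
algebra with a non-degenerate skew-symmetric 2-cocycle ω), the multiplication
defined by `ω(x·y, z) = −ω(y,[x,z])` is left-symmetric. -/
theorem symplectic_lie_algebra_mul_left_symmetric
    {L : Type*} [LieRing L] [LieAlgebra ℝ L]
    [Module.Finite ℝ L]
    (ω : L →ₗ[ℝ] L →ₗ[ℝ] ℝ)
    (hskew : ∀ x y : L, ω x y = -ω y x)
    (hnondeg : ∀ x : L, (∀ y : L, ω x y = 0) → x = 0)
    (hcocycle : ∀ x y z : L, ω ⁅x, y⁆ z + ω ⁅y, z⁆ x + ω ⁅z, x⁆ y = 0)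
    (mul : L → L → L)
    (hmul : ∀ x y z : L, ω (mul x y) z = -ω y ⁅x, z⁆) :
    ∀ x y z : L,
      mul (mul x y) z - mul x (mul y z) = mul (mul y x) z - mul y (mul x z) :=
  symplectic_lie_algebra_mul_left_symmetric_general ω hskew hnondeg hcocycle mul hmul
end

section
/- Let A be a finite-dimensional left-symmetric algebra over ℝ, τ(x) := Tr(R_x), and H_n(x) := (1/n) Tr((R_x)^n). Then Tr((R_x)^n) = τ((R_x)^{n-1}(x)) for all n ≥ 1 and x ∈ A; equivalently, Tr((R_x)^n) = Tr(R_{(R_x)^{n-1}x}), so that H_n(x) = (1/n) τ((R_x)^{n-1}x). -/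
/-- In a finite-dimensional left-symmetric algebra over ℝ with
right-multiplication `R_x = mul.flip x` and `τ(x) = Tr R_x`, one has
`Tr((R_x)^n) = τ((R_x)^{n-1} x) = Tr(R_{(R_x)^{n-1} x})` for all `n ≥ 1`. -/
theorem left_symmetric_trace_polynomials
    {V : Type*} [AddCommGroup V] [Module ℝ V] [FiniteDimensional ℝ V]
    (mul : V →ₗ[ℝ] V →ₗ[ℝ] V)
    (hls : ∀ x y z : V,
      mul (mul x y) z - mul x (mul y z) = mul (mul y x) z - mul y (mul x z)) :
    ∀ n : ℕ, 1 ≤ n → ∀ x : V,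
      LinearMap.trace ℝ V ((mul.flip x) ^ n)
        = LinearMap.trace ℝ V (mul.flip (((mul.flip x) ^ (n - 1)) x)) := by
  intro n hn x
  set f : Module.End ℝ V := mul.flip x with hf
  -- operator identity: f * R_y = R_{f y} + (f * L_y - L_y * f)
  have hop : ∀ y : V, f * mul.flip y
      = mul.flip (f y) + (f * mul y - mul y * f) := by
    intro y
    ext z
    have h := hls z y x
    simp only [Module.End.mul_apply, LinearMap.add_apply, LinearMap.sub_apply,
      LinearMap.flip_apply, hf]
    rw [sub_eq_iff_eq_add.mp h]; abel
  -- Tr(f^k * R_y) = Tr(R_{f^k y})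
  have key : ∀ k : ℕ, ∀ y : V,
      LinearMap.trace ℝ V (f ^ k * mul.flip y)
        = LinearMap.trace ℝ V (mul.flip ((f ^ k) y)) := by
    intro k
    induction k with
    | zero => intro y; simp
    | succ k ih =>
      intro y
      have h1 : f ^ (k + 1) * mul.flip y = f ^ k * (f * mul.flip y) := by
        rw [pow_succ, mul_assoc]
      rw [h1, hop y]
      have h2 : f ^ k * (mul.flip (f y) + (f * mul y - mul y * f))
          = f ^ k * mul.flip (f y) + (f ^ (k+1) * mul y - (f ^ k * mul y) * f) := by
        rw [mul_add, mul_sub, pow_succ]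
        noncomm_ring
      rw [h2, map_add, map_sub]
      have h3 : LinearMap.trace ℝ V ((f ^ k * mul y) * f)
          = LinearMap.trace ℝ V (f ^ (k+1) * mul y) := by
        rw [LinearMap.trace_mul_comm, ← mul_assoc, ← pow_succ']
      rw [h3, sub_self, add_zero, ih]
      rw [pow_succ]
      simp [Module.End.mul_apply]
  obtain ⟨m, rfl⟩ : ∃ m, n = m + 1 := ⟨n - 1, (Nat.succ_pred_eq_of_pos hn).symm⟩
  have : f ^ (m + 1) = f ^ m * mul.flip x := by rw [pow_succ, hf]
  rw [this, key m x]
  simp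
end

section
/- Let (G, ω) be a finite-dimensional symplectic Lie algebra that is unimodular (Tr ad(x) = 0 for all x). Then H_1(x) := Tr(R_x) = 0 for all x, where R_x(y) = y·x is the right-multiplication of the associated left-symmetric structure. -/
/-!
With respect to `ω`, the adjoint of `R_x + ad x` is `-ad x`: this is the defining identity of the
left-symmetric product combined with the cocycle identity. Adjoint endomorphisms for a
nondegenerate form have equal traces, so `Tr R_x = -2 Tr ad x`, which vanishes by unimodularity.
-/

open LinearMap Module

theorem LinearMap.trace_eq_of_isAdjointPair {K V : Type*} [Field K] [AddCommGroup V]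
    [Module K V] [FiniteDimensional K V] {B : V →ₗ[K] V →ₗ[K] K} (hB : B.SeparatingLeft)
    {f g : Module.End K V} (h : IsAdjointPair B B f g) : trace K V f = trace K V g := by
  let e : V ≃ₗ[K] Dual K V := B.linearEquivOfInjective
    (ker_eq_bot.mp (separatingLeft_iff_ker_eq_bot.mp hB)) Subspace.dual_finrank_eq.symm
  have hf : f = e.symm.conj (Dual.transpose (R := K) g) := by
    ext x
    apply e.injective
    ext y
    simp [e, h x y, Dual.transpose_apply]
  rw [hf, trace_conj', trace_transpose']

theorem isAdjointPair_mulRight_add_ad {R L : Type*} [CommRing R] [LieRing L] [LieAlgebra R L]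
    {ω : L →ₗ[R] L →ₗ[R] R} {mul : L →ₗ[R] L →ₗ[R] L} (hskew : ∀ x y : L, ω x y = -ω y x)
    (hcocycle : ∀ x y z : L, ω ⁅x, y⁆ z + ω ⁅y, z⁆ x + ω ⁅z, x⁆ y = 0)
    (hmul : ∀ x y z : L, ω (mul x y) z = -ω y ⁅x, z⁆) (x : L) :
    IsAdjointPair ω ω ⇑(mul.flip x + LieAlgebra.ad R L x) ⇑(-LieAlgebra.ad R L x) := by
  intro y z
  have hyz : ω ⁅y, z⁆ x = -ω x ⁅y, z⁆ := hskew _ _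
  have hzx : ω ⁅z, x⁆ y = ω y ⁅x, z⁆ := by rw [hskew, ← lie_skew, map_neg, neg_neg]
  simp only [LinearMap.add_apply, flip_apply, LinearMap.neg_apply, LieAlgebra.ad_apply, map_add,
    map_neg, hmul]
  linear_combination hcocycle x y z - hyz - hzx

theorem trace_mulRight_eq_neg_two_mul_trace_ad {K L : Type*} [Field K] [LieRing L]
    [LieAlgebra K L] [FiniteDimensional K L] {ω : L →ₗ[K] L →ₗ[K] K} {mul : L →ₗ[K] L →ₗ[K] L}
    (hskew : ∀ x y : L, ω x y = -ω y x) (hnondeg : ω.SeparatingLeft)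
    (hcocycle : ∀ x y z : L, ω ⁅x, y⁆ z + ω ⁅y, z⁆ x + ω ⁅z, x⁆ y = 0)
    (hmul : ∀ x y z : L, ω (mul x y) z = -ω y ⁅x, z⁆) (x : L) :
    trace K L (mul.flip x) = -2 * trace K L (LieAlgebra.ad K L x) := by
  have h := trace_eq_of_isAdjointPair hnondeg
    (isAdjointPair_mulRight_add_ad hskew hcocycle hmul x)
  rw [map_add, map_neg] at h
  linear_combination h

/-- In a finite-dimensional unimodular symplectic Lie algebra,
the first trace polynomial `H₁(x) = Tr(R_x)` vanishes identically. -/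
theorem unimodular_symplectic_lie_algebra_H1_zero
    {L : Type*} [LieRing L] [LieAlgebra ℝ L] [FiniteDimensional ℝ L]
    (ω : L →ₗ[ℝ] L →ₗ[ℝ] ℝ)
    (hskew : ∀ x y : L, ω x y = -ω y x)
    (hnondeg : ∀ x : L, (∀ y : L, ω x y = 0) → x = 0)
    (hcocycle : ∀ x y z : L, ω ⁅x, y⁆ z + ω ⁅y, z⁆ x + ω ⁅z, x⁆ y = 0)
    (mul : L →ₗ[ℝ] L →ₗ[ℝ] L)
    (hmul : ∀ x y z : L, ω (mul x y) z = -ω y ⁅x, z⁆)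
    (hunimod : ∀ x : L, LinearMap.trace ℝ L (LieAlgebra.ad ℝ L x) = 0) :
    ∀ x : L, LinearMap.trace ℝ L (mul.flip x) = 0 := by
  intro x
  rw [trace_mulRight_eq_neg_two_mul_trace_ad hskew hnondeg hcocycle hmul, hunimod, mul_zero]
end

section
/- Let M be a smooth manifold with a Poisson bivector Λ (vanishing Schouten bracket) and suppose two smooth functions H_n, H_{n+1} satisfy the recursion Λ_N^♯ dH_n = Λ^♯ dH_{n+1} for all n in a family {H_n}, where Λ_N(α,β) = Λ(α, N^*β) for a (1,1)-tensor N. If both Λ and Λ_N are Poisson bivectors, then the functions are pairwise in involution with respect to both Poisson brackets: {H_n, H_m}_Λ = {H_n, H_m}_{Λ_N} = 0 for all n, m. -/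
/-!
Antisymmetry of `Λ_N` together with the recursion lets one move a step of the ladder from one
argument of `{·,·}_Λ` to the other: `{H_{n+1}, H_m} = {H_n, H_{m+1}}`. Iterating, every bracket
`{H_n, H_m}` equals `{H_0, H_{n+m}}`, which is also equal to `{H_{n+m}, H_0}` and hence, by
antisymmetry of `Λ`, vanishes. The `Λ_N`-brackets reduce to `Λ`-brackets through the recursion.
-/

namespace Lenard

variable {R V : Type*} [CommRing R] [AddCommGroup V] [Module R V]
  {P Q : Module.Dual R V →ₗ[R] V} {α : ℕ → Module.Dual R V}

theorem apply_sharp_succ_eq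
    (hQ : ∀ a b : Module.Dual R V, b (Q a) = -a (Q b))
    (hP : ∀ a b : Module.Dual R V, b (P a) = -a (P b))
    (hrec : ∀ n, Q (α n) = P (α (n + 1))) (n m : ℕ) :
    α m (P (α (n + 1))) = α (m + 1) (P (α n)) := by
  rw [← hrec n, hQ, hrec m, hP, neg_neg]

theorem apply_sharp_eq_apply_sharp_zero
    (hQ : ∀ a b : Module.Dual R V, b (Q a) = -a (Q b))
    (hP : ∀ a b : Module.Dual R V, b (P a) = -a (P b))
    (hrec : ∀ n, Q (α n) = P (α (n + 1))) (n m : ℕ) :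
    α m (P (α n)) = α (n + m) (P (α 0)) := by
  induction n generalizing m with
  | zero => rw [Nat.zero_add]
  | succ n ih =>
    rw [apply_sharp_succ_eq hQ hP hrec, ih, Nat.add_right_comm, Nat.add_assoc]

theorem apply_sharp_eq_zero [IsAddTorsionFree R]
    (hQ : ∀ a b : Module.Dual R V, b (Q a) = -a (Q b))
    (hP : ∀ a b : Module.Dual R V, b (P a) = -a (P b))
    (hrec : ∀ n, Q (α n) = P (α (n + 1))) (n m : ℕ) :
    α m (P (α n)) = 0 := by
  have hswap : α (n + m) (P (α 0)) = α 0 (P (α (n + m))) := by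
    rw [apply_sharp_eq_apply_sharp_zero hQ hP hrec (n + m) 0, Nat.add_zero]
  rw [apply_sharp_eq_apply_sharp_zero hQ hP hrec, ← self_eq_neg, ← hP, hswap]

end Lenard

/-- Lenard recursion / bihamiltonian involution. Pointwise
formulation: `M` is the set of points of the manifold, `Λs p` and `ΛNs p`
are the sharp maps `Λ^♯`, `Λ_N^♯ : T*_pM → T_pM` of two Poisson bivectors
(antisymmetry of the bivectors is expressed via their sharp maps), and
`d n p` is the differential `dH_n` at `p`. If the recursion
`Λ_N^♯ dH_n = Λ^♯ dH_{n+1}` holds everywhere, then all the functions are in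
involution with respect to both Poisson brackets:
`{H_n,H_m}_Λ = dH_m(Λ^♯ dH_n) = 0` and `{H_n,H_m}_{Λ_N} = dH_m(Λ_N^♯ dH_n) = 0`. -/
theorem lenard_recursion_involution
    {M : Type*} {V : Type*} [AddCommGroup V] [Module ℝ V]
    (Λs ΛNs : M → Module.Dual ℝ V →ₗ[ℝ] V)
    (d : ℕ → M → Module.Dual ℝ V)
    (hΛanti : ∀ (p : M) (α β : Module.Dual ℝ V), β (Λs p α) = -α (Λs p β))
    (hΛNanti : ∀ (p : M) (α β : Module.Dual ℝ V), β (ΛNs p α) = -α (ΛNs p β))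
    (hrec : ∀ (n : ℕ) (p : M), ΛNs p (d n p) = Λs p (d (n + 1) p)) :
    ∀ (n m : ℕ) (p : M),
      (d m p) (Λs p (d n p)) = 0 ∧ (d m p) (ΛNs p (d n p)) = 0 := by
  intro n m p
  have hvanish := Lenard.apply_sharp_eq_zero (α := (d · p)) (hΛNanti p) (hΛanti p) (hrec · p)
  exact ⟨hvanish n m, (hrec n p).symm ▸ hvanish (n + 1) m⟩
end
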